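/- arXiv:1211.3955 — 8 statements merged into one kernel-verified Lean document; each statement's English description precedes it below -/
import Mathlib

section
/- Let p_1 < p_2 < ⋯ < p_n be distinct reals in (0,1] and define bids b_i = i / (p_1 + ⋯ + p_i). Then the bids b_i are strictly decreasing in i, and for every i ∈ {1,…,n}, the value p̂ = 1/b_i = (p_1+⋯+p_i)/i satisfies: the set of ads shown under threshold selection with p̂ is exactly {1,…,i}, and the average CTR of the shown ads equals p̂ (i.e., p̂ is a fixed point of the calibration operator). -/
open Finset

/-!
The threshold `1 / b i` is the mean `m i` of the first `i + 1` CTRs. Since the CTRs increase,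
every new CTR exceeds the current prefix mean, so the prefix means increase strictly. Hence the
bids `b = 1 / m` decrease strictly, and at the threshold `m i` ad `j` is shown iff `m j ≤ m i`,
i.e. iff `j ≤ i`.
-/

section PrefixMean

variable {α 𝕜 : Type*} [LinearOrder α] [LocallyFiniteOrderBot α]
  [Field 𝕜] [LinearOrder 𝕜] [IsStrictOrderedRing 𝕜]

def prefixMean (p : α → 𝕜) (i : α) : 𝕜 :=
  (∑ j ∈ Iic i, p j) / #(Iic i)

lemma card_Iic_pos (i : α) : 0 < #(Iic i) :=
  card_pos.2 ⟨i, mem_Iic.2 le_rfl⟩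

lemma sum_Iic_eq_card_mul_prefixMean (p : α → 𝕜) (i : α) :
    ∑ j ∈ Iic i, p j = #(Iic i) * prefixMean p i :=
  (mul_div_cancel₀ _ (by exact_mod_cast (card_Iic_pos i).ne')).symm

lemma prefixMean_pos {p : α → 𝕜} (hp : ∀ j, 0 < p j) (i : α) : 0 < prefixMean p i :=
  div_pos (sum_pos (fun j _ ↦ hp j) ⟨i, mem_Iic.2 le_rfl⟩) (by exact_mod_cast card_Iic_pos i)

lemma prefixMean_le {p : α → 𝕜} (hp : Monotone p) (i : α) : prefixMean p i ≤ p i := by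
  rw [prefixMean, div_le_iff₀ (by exact_mod_cast card_Iic_pos i), mul_comm, ← nsmul_eq_mul]
  exact sum_le_card_nsmul _ _ _ fun j hj ↦ hp (mem_Iic.1 hj)

lemma strictMono_prefixMean [LocallyFiniteOrder α] {p : α → 𝕜} (hp : StrictMono p) : StrictMono (prefixMean p) := by
  intro i k hik
  have hsplit := Iic_union_Ioc_eq_Iic hik.le
  have hdisj := Iic_disjoint_Ioc (c := k) (le_refl i)
  have hnew : #(Ioc i k) * prefixMean p i < ∑ j ∈ Ioc i k, p j := by
    rw [← nsmul_eq_mul, ← sum_const]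
    exact sum_lt_sum_of_nonempty ⟨k, mem_Ioc.2 ⟨hik, le_rfl⟩⟩ fun j hj ↦
      (prefixMean_le hp.monotone i).trans_lt (hp (mem_Ioc.1 hj).1)
  have hsum : #(Iic k) * prefixMean p i < ∑ j ∈ Iic k, p j := by
    rw [← hsplit, sum_union hdisj, card_union_of_disjoint hdisj, sum_Iic_eq_card_mul_prefixMean]
    push_cast
    linarith
  conv_rhs => rw [prefixMean]
  rwa [lt_div_iff₀ (by exact_mod_cast card_Iic_pos k), mul_comm]

end PrefixMean

lemma prefixMean_fin {n : ℕ} (p : Fin n → ℝ) (i : Fin n) :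
    prefixMean p i = (∑ j ∈ Iic i, p j) / ((i : ℕ) + 1 : ℝ) := by
  rw [prefixMean, Fin.card_Iic, Nat.cast_succ]

theorem exponentially_many_fixed_points_general (n : ℕ)
    (p : Fin n → ℝ) (hmono : StrictMono p)
    (hpos : ∀ i, 0 < p i)
    (b : Fin n → ℝ)
    (hb : ∀ i : Fin n, b i = ((i : ℕ) + 1 : ℝ) / ∑ j ∈ Finset.Iic i, p j) :
    StrictAnti b ∧
    ∀ i : Fin n,
      (Finset.univ.filter (fun j : Fin n => b j * ((∑ j ∈ Finset.Iic i, p j) / ((i : ℕ) + 1 : ℝ)) ≥ 1)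
        = Finset.Iic i) ∧
      (∑ j ∈ Finset.Iic i, p j) / ((Finset.Iic i).card : ℝ)
        = (∑ j ∈ Finset.Iic i, p j) / ((i : ℕ) + 1 : ℝ) := by
  have hmean := strictMono_prefixMean hmono
  have hb_eq : ∀ i, b i = 1 / prefixMean p i := fun i ↦ by rw [hb, prefixMean_fin, one_div_div]
  refine ⟨fun i k hik ↦ ?_, fun i ↦ ⟨?_, prefixMean_fin p i⟩⟩
  · rw [hb_eq, hb_eq]
    exact one_div_lt_one_div_of_lt (prefixMean_pos hpos i) (hmean hik)
  · ext j
    rw [mem_filter, mem_Iic, ← prefixMean_fin, hb_eq, one_div_mul_eq_div, ge_iff_le,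
      one_le_div (prefixMean_pos hpos j), hmean.le_iff_le]
    exact and_iff_right (mem_univ j)

/-- Single query, single raw prediction, threshold selection.  Let
`p 0 < p 1 < ⋯ < p (n-1)` be CTRs in `(0,1]` and define bids
`b i = (i+1) / (p 0 + ⋯ + p i)`.  Then the bids are strictly decreasing, and
for every `i`, the value `p̂ = (p 0 + ⋯ + p i) / (i+1) = 1 / b i` shows exactly
the ads `{0,…,i}` (ad `j` shows iff `b j * p̂ ≥ 1`), and the average CTR of the
shown ads equals `p̂`, i.e. `p̂` is a fixed point of the calibration operator. -/
theorem exponentially_many_fixed_points (n : ℕ) (hn : 0 < n)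
    (p : Fin n → ℝ) (hmono : StrictMono p)
    (hpos : ∀ i, 0 < p i) (hle : ∀ i, p i ≤ 1)
    (b : Fin n → ℝ)
    (hb : ∀ i : Fin n, b i = ((i : ℕ) + 1 : ℝ) / ∑ j ∈ Finset.Iic i, p j) :
    StrictAnti b ∧
    ∀ i : Fin n,
      (Finset.univ.filter (fun j : Fin n => b j * ((∑ j ∈ Finset.Iic i, p j) / ((i : ℕ) + 1 : ℝ)) ≥ 1)
        = Finset.Iic i) ∧
      (∑ j ∈ Finset.Iic i, p j) / ((Finset.Iic i).card : ℝ)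
        = (∑ j ∈ Finset.Iic i, p j) / ((i : ℕ) + 1 : ℝ) :=
  exponentially_many_fixed_points_general n p hmono hpos b hb
end

section
/- With n+1 ads per query structured as: one ad (p,b)=(0.5,2), n ads (1,1.9), and n ads (0,1.8), under threshold selection: (a) p̂ = 0.5 is a fixed point (only the first ad shows and its CTR is 0.5); (b) the expected value of showing only the first ad is 0; (c) any p̂ with 1/1.9 ≤ p̂ < 1/1.8 shows the first 1+n ads and yields value 0.9n, but the average CTR of shown ads is (0.5+n)/(n+1) ≠ p̂ for n ≥ 2, so no such p̂ is a fixed point; (d) any p̂ ≥ 1/1.8 shows all ads and yields value 0.9n − n < 0. Hence for n ≥ 2 every fixed point of the calibration operator has expected value 0 while the efficiency-maximizing choice has value 0.9n. -/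
open Classical

/- Single query, single raw prediction, threshold selection (mechanism ALL).
Ads: one ad (p,b) = (0.5, 2); `n` ads (1, 1.9); `n` ads (0, 1.8).
An ad shows iff `b * phat ≥ 1`; showing ad (p,b) generates value `p*b - 1`. -/

/-- the (0.5,2) ad shows -/
def showsA (phat : ℝ) : Prop := 2 * phat ≥ 1
/-- the (1,1.9) ads show -/
def showsB (phat : ℝ) : Prop := 1.9 * phat ≥ 1
/-- the (0,1.8) ads show -/
def showsC (phat : ℝ) : Prop := 1.8 * phat ≥ 1

/-- average CTR of the shown ads -/
noncomputable def meanCTR (n : ℕ) (phat : ℝ) : ℝ :=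
  ((if showsA phat then (0.5 : ℝ) else 0) + (if showsB phat then (n : ℝ) * 1 else 0)
    + (if showsC phat then (n : ℝ) * 0 else 0)) /
  ((if showsA phat then (1 : ℝ) else 0) + (if showsB phat then (n : ℝ) else 0)
    + (if showsC phat then (n : ℝ) else 0))

/-- expected value generated by serving with prediction `phat` -/
noncomputable def EV (n : ℕ) (phat : ℝ) : ℝ :=
  (if showsA phat then (0.5 : ℝ) * 2 - 1 else 0)
    + (if showsB phat then (n : ℝ) * (1 * 1.9 - 1) else 0)
    + (if showsC phat then (n : ℝ) * (0 * 1.8 - 1) else 0)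

/-- `phat` is a fixed point of the calibration operator: some ad shows and the
average CTR of the shown ads equals `phat`. -/
noncomputable def isFixedPoint (n : ℕ) (phat : ℝ) : Prop :=
  (showsA phat ∨ showsB phat ∨ showsC phat) ∧ meanCTR n phat = phat

lemma showsB_iff {p : ℝ} : showsB p ↔ 1 / 1.9 ≤ p := by
  rw [showsB, ge_iff_le, div_le_iff₀' (by norm_num)]

lemma showsC_iff {p : ℝ} : showsC p ↔ 1 / 1.8 ≤ p := by
  rw [showsC, ge_iff_le, div_le_iff₀' (by norm_num)]

lemma showsA_of_showsB {p : ℝ} (h : showsB p) : showsA p := by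
  rw [showsB_iff] at h
  rw [showsA]
  linarith [show (1 : ℝ) / 2 ≤ 1 / 1.9 by norm_num]

lemma showsB_of_showsC {p : ℝ} (h : showsC p) : showsB p := by
  rw [showsC_iff] at h
  rw [showsB_iff]
  linarith [show (1 : ℝ) / 1.9 ≤ 1 / 1.8 by norm_num]

section Regions

variable (n : ℕ) {p : ℝ}

lemma EV_of_not_showsB (hB : ¬ showsB p) : EV n p = 0 := by
  have hC : ¬ showsC p := mt showsB_of_showsC hB
  unfold EV
  split_ifs <;> norm_num

lemma EV_of_showsB_of_not_showsC (hB : showsB p) (hC : ¬ showsC p) : EV n p = 0.9 * n := by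
  unfold EV
  rw [if_pos (showsA_of_showsB hB), if_pos hB, if_neg hC]
  ring

lemma EV_of_showsC (hC : showsC p) : EV n p = 0.9 * n - n := by
  have hB := showsB_of_showsC hC
  unfold EV
  rw [if_pos (showsA_of_showsB hB), if_pos hB, if_pos hC]
  ring

lemma meanCTR_of_showsA_of_not_showsB (hA : showsA p) (hB : ¬ showsB p) :
    meanCTR n p = 1 / 2 := by
  have hC : ¬ showsC p := mt showsB_of_showsC hB
  unfold meanCTR
  rw [if_pos hA, if_neg hB, if_neg hC, if_pos hA, if_neg hB, if_neg hC]
  norm_num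

lemma meanCTR_of_showsB_of_not_showsC (hB : showsB p) (hC : ¬ showsC p) :
    meanCTR n p = (0.5 + n) / (n + 1) := by
  have hA := showsA_of_showsB hB
  unfold meanCTR
  rw [if_pos hA, if_pos hB, if_neg hC, if_pos hA, if_pos hB, if_neg hC]
  ring_nf

lemma meanCTR_of_showsC (hC : showsC p) : meanCTR n p = 1 / 2 := by
  have hB := showsB_of_showsC hC
  have hA := showsA_of_showsB hB
  unfold meanCTR
  rw [if_pos hA, if_pos hB, if_pos hC, if_pos hA, if_pos hB, if_pos hC,
    div_eq_iff (by positivity)]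
  ring

/-- The mean CTR is then `1/2` or `(0.5 + n)/(n + 1)`; the latter is `1/2` for `n = 0` and at
least `3/4` otherwise, so it never lands in the window `1/1.9 ≤ p` (resp. `1/1.9 ≤ p < 1/1.8`)
that produces it. -/
lemma meanCTR_ne_self_of_showsB (hB : showsB p) : meanCTR n p ≠ p := by
  have hp := showsB_iff.mp hB
  by_cases hC : showsC p
  · rw [meanCTR_of_showsC n hC]
    linarith [show (1 : ℝ) / 2 < 1 / 1.9 by norm_num]
  · have hp' : p < 1 / 1.8 := not_le.mp (mt showsC_iff.mpr hC)
    rw [meanCTR_of_showsB_of_not_showsC n hB hC, Ne, div_eq_iff (by positivity)]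
    intro h
    rcases Nat.eq_zero_or_pos n with rfl | hn
    · norm_num at h hp
      linarith
    · have hn' : (1 : ℝ) ≤ n := by exact_mod_cast hn
      norm_num at hp'
      nlinarith

end Regions

lemma not_isFixedPoint_of_showsB (n : ℕ) {p : ℝ} (hB : showsB p) : ¬ isFixedPoint n p :=
  fun h => meanCTR_ne_self_of_showsB n hB h.2

lemma EV_eq_zero_of_isFixedPoint (n : ℕ) {p : ℝ} (h : isFixedPoint n p) : EV n p = 0 :=
  EV_of_not_showsB n fun hB => not_isFixedPoint_of_showsB n hB h

lemma EV_le (n : ℕ) (p : ℝ) : EV n p ≤ 0.9 * n := by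
  have hn : (0 : ℝ) ≤ n := n.cast_nonneg
  by_cases hB : showsB p
  · by_cases hC : showsC p
    · rw [EV_of_showsC n hC]
      linarith
    · rw [EV_of_showsB_of_not_showsC n hB hC]
  · rw [EV_of_not_showsB n hB]
    positivity

lemma isFixedPoint_half (n : ℕ) : isFixedPoint n (1 / 2) := by
  have hA : showsA (1 / 2) := by norm_num [showsA]
  have hB : ¬ showsB (1 / 2) := by norm_num [showsB_iff]
  exact ⟨Or.inl hA, meanCTR_of_showsA_of_not_showsB n hA hB⟩

/-- (a) `phat = 0.5` is a fixed point; (b) its expected value is 0;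
(c) any `phat ∈ [1/1.9, 1/1.8)` shows the first `1+n` ads with value `0.9 n` but is
not a fixed point (mean CTR `(0.5+n)/(n+1) ≠ phat`); (d) any `phat ≥ 1/1.8` shows all
ads with value `0.9 n - n < 0`.  Hence for `n ≥ 2` every fixed point has expected
value `0` while the efficiency-maximizing choice attains value `0.9 n`. -/
theorem fixed_points_have_bad_efficiency (n : ℕ) (hn : 2 ≤ n) :
    (isFixedPoint n (1/2) ∧ EV n (1/2) = 0) ∧
    (∀ phat : ℝ, 1/1.9 ≤ phat → phat < 1/1.8 →
      (showsA phat ∧ showsB phat ∧ ¬ showsC phat) ∧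
      EV n phat = 0.9 * n ∧
      meanCTR n phat = (0.5 + n) / (n + 1) ∧ meanCTR n phat ≠ phat) ∧
    (∀ phat : ℝ, 1/1.8 ≤ phat →
      (showsA phat ∧ showsB phat ∧ showsC phat) ∧
      EV n phat = 0.9 * n - n ∧ EV n phat < 0) ∧
    (∀ phat : ℝ, isFixedPoint n phat → EV n phat = 0) ∧
    (∀ phat : ℝ, EV n phat ≤ 0.9 * n) ∧
    (∃ phat : ℝ, 0 ≤ phat ∧ phat ≤ 1 ∧ EV n phat = 0.9 * n) := by
  have middle (phat : ℝ) (h₁ : 1/1.9 ≤ phat) (h₂ : phat < 1/1.8) :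
      showsB phat ∧ ¬ showsC phat :=
    ⟨showsB_iff.mpr h₁, fun hC => h₂.not_ge (showsC_iff.mp hC)⟩
  refine ⟨⟨isFixedPoint_half n, EV_eq_zero_of_isFixedPoint n (isFixedPoint_half n)⟩,
    fun phat h₁ h₂ => ?_, fun phat h => ?_, fun _ => EV_eq_zero_of_isFixedPoint n,
    EV_le n, ⟨1/1.9, by norm_num, by norm_num, ?_⟩⟩
  · obtain ⟨hB, hC⟩ := middle phat h₁ h₂
    exact ⟨⟨showsA_of_showsB hB, hB, hC⟩, EV_of_showsB_of_not_showsC n hB hC,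
      meanCTR_of_showsB_of_not_showsC n hB hC, meanCTR_ne_self_of_showsB n hB⟩
  · have hC := showsC_iff.mpr h
    have hn' : (2 : ℝ) ≤ n := by exact_mod_cast hn
    refine ⟨⟨showsA_of_showsB (showsB_of_showsC hC), showsB_of_showsC hC, hC⟩,
      EV_of_showsC n hC, ?_⟩
    rw [EV_of_showsC n hC]
    linarith
  · obtain ⟨hB, hC⟩ := middle (1/1.9) le_rfl (by norm_num)
    exact EV_of_showsB_of_not_showsC n hB hC
end

section
/- Under mechanism ONE with a single query, the prediction map f* defined by f*(z) = E_{f_z}[p | z] (the average CTR among the highest-bid ads with raw prediction z), restricted so that f*(z') = 0 except at z* = argmax_z b(z)·E_C[p | z, b(z)], is both efficiency-maximizing and self-calibrated: the expected value it achieves equals max_z b(z)·E_C[p | z, b(z)], and the observed average CTR at the served bucket equals the prediction. -/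
open Finset

/-- The ads with raw prediction `z'` achieving the maximal bid among that bucket. -/
noncomputable def topSet {n K : ℕ} (b : Fin n → ℝ) (z : Fin n → Fin K) (z' : Fin K) : Finset (Fin n) :=
  (Finset.univ.filter (fun i => z i = z')).filter
    (fun i => ∀ j, z j = z' → b j ≤ b i)

/-- `E_C[p | z', b(z')]`: the mean CTR over the highest-bid ads in bucket `z'`. -/
noncomputable def meanTop {n K : ℕ} (p b : Fin n → ℝ) (z : Fin n → Fin K) (z' : Fin K) : ℝ :=
  (∑ i ∈ topSet b z z', p i) / ((topSet b z z').card : ℝ)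

/-- `b(z') * E_C[p | z', b(z')]`: the expected value obtained when bucket `z'` wins. -/
noncomputable def bucketValue {n K : ℕ} (p b : Fin n → ℝ) (z : Fin n → Fin K) (z' : Fin K) : ℝ :=
  (∑ i ∈ topSet b z z', b i * p i) / ((topSet b z z').card : ℝ)

/-!
Under `fstar` every ad outside bucket `zstar` scores `0`, while an ad of `zstar` scores its bid
times `meanTop p b z zstar`. Since `bucketValue p b z zstar` is positive, bucket `zstar` has
top-bid ads, they share a bid `b₀`, and `bucketValue = b₀ * meanTop`; so `meanTop > 0` and the
score maximizers are exactly the top-bid ads of `zstar`. Averaging over them gives the value and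
the observed CTR directly from the definitions.
-/

noncomputable def shownSet {n K : ℕ} (b : Fin n → ℝ) (f : Fin K → ℝ) (z : Fin n → Fin K) :
    Finset (Fin n) :=
  univ.filter (fun i => ∀ j, b j * f (z j) ≤ b i * f (z i))

section

variable {n K : ℕ} {p b : Fin n → ℝ} {z : Fin n → Fin K} {z' : Fin K} {i j : Fin n}

theorem mem_topSet : i ∈ topSet b z z' ↔ z i = z' ∧ ∀ j, z j = z' → b j ≤ b i := by
  simp only [topSet, mem_filter, mem_univ, true_and]

theorem bid_eq_of_mem_topSet (hi : i ∈ topSet b z z') (hj : j ∈ topSet b z z') : b i = b j :=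
  le_antisymm ((mem_topSet.1 hj).2 i (mem_topSet.1 hi).1) ((mem_topSet.1 hi).2 j (mem_topSet.1 hj).1)

theorem bucketValue_eq_mul_meanTop (hi : i ∈ topSet b z z') :
    bucketValue p b z z' = b i * meanTop p b z z' := by
  have hsum : ∑ j ∈ topSet b z z', b j * p j = b i * ∑ j ∈ topSet b z z', p j := by
    rw [mul_sum]
    exact sum_congr rfl fun j hj => by rw [bid_eq_of_mem_topSet hj hi]
  rw [bucketValue, meanTop, hsum, mul_div_assoc]

theorem topSet_nonempty_of_bucketValue_ne_zero (h : bucketValue p b z z' ≠ 0) :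
    (topSet b z z').Nonempty := by
  by_contra hempty
  rw [not_nonempty_iff_eq_empty] at hempty
  simp [bucketValue, hempty] at h

theorem meanTop_pos (hb : ∀ i, 0 < b i) (hpos : 0 < bucketValue p b z z') :
    0 < meanTop p b z z' := by
  obtain ⟨i, hi⟩ := topSet_nonempty_of_bucketValue_ne_zero hpos.ne'
  rw [bucketValue_eq_mul_meanTop hi] at hpos
  exact pos_of_mul_pos_right hpos (hb i).le

theorem shownSet_eq_topSet {f : Fin K → ℝ} (hb : ∀ i, 0 < b i) (hf : 0 < f z')
    (hf_ne : ∀ y ≠ z', f y = 0) (hne : (topSet b z z').Nonempty) :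
    shownSet b f z = topSet b z z' := by
  obtain ⟨i₀, hi₀⟩ := hne
  obtain ⟨hzi₀, hbi₀⟩ := mem_topSet.1 hi₀
  ext i
  simp only [shownSet, mem_filter, mem_univ, true_and, mem_topSet]
  constructor
  · intro hi
    have hscore := hi i₀
    rw [hzi₀] at hscore
    by_cases hzi : z i = z'
    · rw [hzi] at hscore
      exact ⟨hzi, fun j hj => (hbi₀ j hj).trans (le_of_mul_le_mul_right hscore hf)⟩
    · rw [hf_ne _ hzi, mul_zero] at hscore
      exact absurd hscore (mul_pos (hb i₀) hf).not_ge
  · rintro ⟨hzi, hbi⟩ j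
    rw [hzi]
    by_cases hzj : z j = z'
    · rw [hzj]
      exact mul_le_mul_of_nonneg_right (hbi j hzj) hf.le
    · rw [hf_ne _ hzj, mul_zero]
      exact mul_nonneg (hb i).le hf.le

end

theorem one_single_query_nice_general (n K : ℕ) (p b : Fin n → ℝ) (z : Fin n → Fin K)
    (hb : ∀ i, 0 < b i)
    (zstar : Fin K)
    (hpos : 0 < bucketValue p b z zstar)
    (fstar : Fin K → ℝ)
    (hfstar : fstar zstar = meanTop p b z zstar ∧ ∀ z' ≠ zstar, fstar z' = 0) :
    (Finset.univ.filter (fun i => ∀ j, b j * fstar (z j) ≤ b i * fstar (z i))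
        = topSet b z zstar) ∧
    ((∑ i ∈ Finset.univ.filter (fun i => ∀ j, b j * fstar (z j) ≤ b i * fstar (z i)),
        b i * p i) /
      ((Finset.univ.filter (fun i => ∀ j, b j * fstar (z j) ≤ b i * fstar (z i))).card : ℝ)
        = bucketValue p b z zstar) ∧
    ((∑ i ∈ topSet b z zstar, p i) / ((topSet b z zstar).card : ℝ) = fstar zstar) := by
  obtain ⟨hf_zstar, hf_ne⟩ := hfstar
  have hf_pos : 0 < fstar zstar := hf_zstar ▸ meanTop_pos hb hpos
  have hshown : shownSet b fstar z = topSet b z zstar :=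
    shownSet_eq_topSet hb hf_pos hf_ne (topSet_nonempty_of_bucketValue_ne_zero hpos.ne')
  unfold shownSet at hshown
  refine ⟨hshown, ?_, hf_zstar.symm⟩
  rw [hshown]
  rfl

/-- Mechanism ONE with a single query.  Let `zstar` be a bucket maximizing
`b(z) * E_C[p | z, b(z)]` over all nonempty buckets, with positive maximal value, and
let `fstar` be the prediction map with `fstar zstar = E_{f_{zstar}}[p | zstar]`
(the mean CTR of the highest-bid ads in bucket `zstar`) and `fstar z' = 0` elsewhere.
Then the set of ads that can show under `fstar` (the ads maximizing `b i * fstar (z i)`,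
ties broken uniformly) is exactly the set of highest-bid ads of bucket `zstar`; the
expected value achieved equals `max_z b(z) * E_C[p | z, b(z)]`; and the observed average
CTR at the served bucket equals the prediction, so `fstar` is efficiency-maximizing
and self-calibrated. -/
theorem one_single_query_nice (n K : ℕ) (p b : Fin n → ℝ) (z : Fin n → Fin K)
    (hp : ∀ i, 0 ≤ p i ∧ p i ≤ 1) (hb : ∀ i, 0 < b i)
    (zstar : Fin K)
    (hmax : IsGreatest
      {v : ℝ | ∃ z' : Fin K, (Finset.univ.filter (fun i => z i = z')).Nonempty ∧
        v = bucketValue p b z z'}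
      (bucketValue p b z zstar))
    (hpos : 0 < bucketValue p b z zstar)
    (fstar : Fin K → ℝ)
    (hfstar : fstar zstar = meanTop p b z zstar ∧ ∀ z' ≠ zstar, fstar z' = 0) :
    (Finset.univ.filter (fun i => ∀ j, b j * fstar (z j) ≤ b i * fstar (z i))
        = topSet b z zstar) ∧
    ((∑ i ∈ Finset.univ.filter (fun i => ∀ j, b j * fstar (z j) ≤ b i * fstar (z i)),
        b i * p i) /
      ((Finset.univ.filter (fun i => ∀ j, b j * fstar (z j) ≤ b i * fstar (z i))).card : ℝ)
        = bucketValue p b z zstar) ∧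
    ((∑ i ∈ topSet b z zstar, p i) / ((topSet b z zstar).card : ℝ) = fstar zstar) :=
  one_single_query_nice_general n K p b z hb zstar hpos fstar hfstar
end

section
/- Under mechanism ONE, if every ad i satisfies p_i = 1/b_i and all raw predictions z_i are distinct, then for every subset I of the ads, the prediction map f_I with f_I(z_i) = p_i for i ∈ I and f_I(z_i) = 0 otherwise is self-calibrated: all ads in I tie with score b_i·f_I(z_i) = 1, are shown uniformly at random, and the expected CTR of the shown ad with raw prediction z_i equals f_I(z_i). Hence there are 2^n distinct self-calibrated prediction maps showing different sets of ads. -/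
open Finset

/-! With `f_I(z_i) = 1/b_i` on `I` and `0` elsewhere, every score `b_i f_I(z_i)` is the
indicator of `I`, so the maximizers are exactly `I`. Since the raw predictions are distinct,
each bucket `z_i` contains the single ad `i`, whose CTR is `p_i = f_I(z_i)`. Two subsets
differ at some ad `i`, and there one map takes the value `p_i > 0`, the other `0`. -/

theorem Finset.filter_apply_eq_apply_eq_singleton {ι β : Type*} [DecidableEq β] {z : ι → β}
    (hz : Function.Injective z) {I : Finset ι} {i : ι} (hi : i ∈ I) :
    I.filter (fun j => z j = z i) = {i} := by
  ext j
  simp only [mem_filter, mem_singleton, hz.eq_iff, and_iff_right_iff_imp]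
  rintro rfl
  exact hi

theorem Finset.filter_forall_le_eq_of_eq_ite {ι α : Type*} [Fintype ι] [DecidableEq ι]
    [LinearOrder α] {s : ι → α} [DecidablePred fun i => ∀ j, s j ≤ s i] {I : Finset ι} {c d : α}
    (hdc : d < c) (hs : ∀ i, s i = if i ∈ I then c else d) (hI : I.Nonempty) :
    univ.filter (fun i => ∀ j, s j ≤ s i) = I := by
  obtain ⟨i₀, hi₀⟩ := hI
  ext i
  simp only [mem_filter, mem_univ, true_and]
  refine ⟨fun h => by_contra fun hi => ?_, fun hi j => ?_⟩
  · have := h i₀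
    rw [hs, hs, if_pos hi₀, if_neg hi] at this
    exact hdc.not_ge this
  · rw [hs, hs, if_pos hi]
    split_ifs
    exacts [le_rfl, hdc.le]

theorem Finset.exists_ite_mem_ne_of_ne {ι M : Type*} [DecidableEq ι] [Zero M] {f : ι → M}
    (hf : ∀ i, f i ≠ 0) {I J : Finset ι} (hIJ : I ≠ J) :
    ∃ i, (if i ∈ I then f i else 0) ≠ (if i ∈ J then f i else 0) := by
  obtain ⟨i, hi⟩ := not_forall.mp (mt Finset.ext hIJ)
  refine ⟨i, ?_⟩
  by_cases hI : i ∈ I <;> by_cases hJ : i ∈ J <;> simp_all [(hf i).symm]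

/-- Mechanism ONE, single query with `n` ads.  Ad `i` has bid `b i ≥ 1`, CTR
`p i = 1 / b i ∈ (0,1]`, and the raw predictions `z i` are distinct.  For any subset
`I` of the ads, let `fI` be the prediction map with `fI (z i) = p i` for `i ∈ I` and
`fI (z i) = 0` otherwise.  Then: every ad in `I` has score `b i * fI (z i) = 1`; if `I`
is nonempty, the ads that can show (those maximizing the score, one chosen uniformly at
random) are exactly the ads of `I`; for each `i ∈ I`, the only shown ad in bucket `z i`
is `i` itself, so the expected CTR of the shown ad with raw prediction `z i` equals
`fI (z i)` — i.e. `fI` is self-calibrated.  Moreover distinct subsets give distinct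
prediction maps, so there are `2^n` distinct self-calibrated maps showing different
sets of ads. -/
theorem exponentially_many_self_calibrated_maps (n : ℕ)
    (b p : Fin n → ℝ) (z : Fin n → ℕ)
    (hb : ∀ i, 1 ≤ b i) (hp : ∀ i, p i = 1 / b i)
    (hz : Function.Injective z) :
    (∀ (I : Finset (Fin n)) (fI : ℕ → ℝ),
      (∀ i, fI (z i) = if i ∈ I then p i else 0) →
      (∀ i ∈ I, b i * fI (z i) = 1) ∧
      (I.Nonempty →
        (Finset.univ.filter (fun i => ∀ j, b j * fI (z j) ≤ b i * fI (z i)) = I) ∧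
        (∀ i ∈ I,
          I.filter (fun j => z j = z i) = {i} ∧
          (∑ j ∈ I.filter (fun j => z j = z i), p j) /
            ((I.filter (fun j => z j = z i)).card : ℝ) = fI (z i)))) ∧
    (∀ (I J : Finset (Fin n)) (fI fJ : ℕ → ℝ),
      (∀ i, fI (z i) = if i ∈ I then p i else 0) →
      (∀ i, fJ (z i) = if i ∈ J then p i else 0) →
      I ≠ J → ∃ m : ℕ, fI m ≠ fJ m) := by
  have hb0 : ∀ i, 0 < b i := fun i => one_pos.trans_le (hb i)
  refine ⟨fun I fI hfI => ?_, fun I J fI fJ hfI hfJ hIJ => ?_⟩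
  · have hscore : ∀ i, b i * fI (z i) = if i ∈ I then 1 else 0 := fun i => by
      rw [hfI i, hp i]
      split_ifs
      exacts [mul_one_div_cancel (hb0 i).ne', mul_zero _]
    have hbucket : ∀ i ∈ I, I.filter (fun j => z j = z i) = {i} :=
      fun i hi => filter_apply_eq_apply_eq_singleton hz hi
    refine ⟨fun i hi => by rw [hscore, if_pos hi],
      fun hI => ⟨filter_forall_le_eq_of_eq_ite one_pos hscore hI, fun i hi => ⟨hbucket i hi, ?_⟩⟩⟩
    rw [hbucket i hi, sum_singleton, card_singleton, Nat.cast_one, div_one, hfI i, if_pos hi]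
  · have hp_ne : ∀ i, p i ≠ 0 := fun i => by rw [hp i]; exact (one_div_pos.mpr (hb0 i)).ne'
    obtain ⟨i, hi⟩ := exists_ite_mem_ne_of_ne hp_ne hIJ
    exact ⟨z i, by rwa [hfI, hfJ]⟩
end

section
/- Under threshold selection (mechanism ALL), Property E2 implies selection invariance: for any prediction map f and any bucket z such that some ad with raw prediction z is shown under f, the expected CTR over shown ads in bucket z under f equals E_C[p | z]. Key step: since mechanism ALL shows either all or none of the ads sharing a (z,b) pair, E_f[p | z,b] = E_C[p | z,b] whenever defined, and then E_f[p|z] = E_f[E_C[p|z,b]] = E_C[p|z] by Property E2. -/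
open Finset

/-- `E[p | S]`: the `w`-weighted mean of `p` over a finite set `S` of ads. -/
noncomputable def condMean {n : ℕ} (w p : Fin n → ℝ) (S : Finset (Fin n)) : ℝ :=
  (∑ i ∈ S, w i * p i) / (∑ i ∈ S, w i)

/-!
Whether mechanism ALL shows an ad depends only on its pair `(z, b)`, so the shown ads of a
bucket form a union of whole `(z, b)`-cells. By Property E2 each of these cells has mean
`E_C[p | z]`, hence so does their union.
-/

section condMean

variable {n : ℕ} {w p : Fin n → ℝ}

theorem condMean_eq_iff {S : Finset (Fin n)} {m : ℝ} (hS : ∑ i ∈ S, w i ≠ 0) :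
    condMean w p S = m ↔ ∑ i ∈ S, w i * p i = m * ∑ i ∈ S, w i :=
  div_eq_iff hS

theorem condMean_eq_of_saturated {κ : Type*} [DecidableEq κ] {key : Fin n → κ}
    {S : Finset (Fin n)} {m : ℝ} (hw : ∀ i ∈ S, 0 < w i)
    (hsat : ∀ i ∈ S, ∀ j, key j = key i → j ∈ S)
    (hcell : ∀ i ∈ S, condMean w p (univ.filter fun j => key j = key i) = m)
    (hS : S.Nonempty) : condMean w p S = m := by
  have cell_eq : ∀ i ∈ S, univ.filter (fun j => key j = key i) = S.filter (key · = key i) := by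
    intro i hi
    ext j
    simp only [mem_filter, mem_univ, true_and, iff_and_self]
    exact hsat i hi j
  have cell_sum : ∀ i ∈ S, ∑ j ∈ S.filter (key · = key i), w j * p j
      = m * ∑ j ∈ S.filter (key · = key i), w j := by
    intro i hi
    have hpos : 0 < ∑ j ∈ S.filter (key · = key i), w j :=
      sum_pos (fun j hj => hw j (mem_filter.mp hj).1) ⟨i, mem_filter.mpr ⟨hi, rfl⟩⟩
    rw [← condMean_eq_iff hpos.ne', ← cell_eq i hi]
    exact hcell i hi
  have hmaps : ∀ i ∈ S, key i ∈ S.image key := fun i hi => mem_image_of_mem key hi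
  rw [condMean_eq_iff (sum_pos hw hS).ne', ← sum_fiberwise_of_maps_to hmaps,
    ← sum_fiberwise_of_maps_to hmaps w, mul_sum]
  refine sum_congr rfl fun k hk => ?_
  obtain ⟨i, hi, rfl⟩ := mem_image.mp hk
  exact cell_sum i hi

end condMean

theorem propE2_implies_selection_invariance_ALL_general (n : ℕ)
    (p b w : Fin n → ℝ) (z : Fin n → ℕ)
    (hw : ∀ i, 0 < w i)
    (hE2 : ∀ i : Fin n,
      condMean w p (Finset.univ.filter (fun j => z j = z i ∧ b j = b i))
        = condMean w p (Finset.univ.filter (fun j => z j = z i))) :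
    ∀ (f : ℕ → ℝ) (z' : ℕ),
      (∃ i : Fin n, z i = z' ∧ b i * f (z i) ≥ 1) →
      condMean w p (Finset.univ.filter (fun j => z j = z' ∧ b j * f (z j) ≥ 1))
        = condMean w p (Finset.univ.filter (fun j => z j = z')) := by
  rintro f z' ⟨i₀, hi₀⟩
  refine condMean_eq_of_saturated (key := fun j => (z j, b j)) (fun i _ => hw i) ?_ ?_
    ⟨i₀, by simpa using hi₀⟩
  · intro i hi j hji
    simp only [Prod.ext_iff, mem_filter, mem_univ, true_and] at hi hji ⊢
    rwa [hji.1, hji.2]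
  · intro i hi
    have hzi : z i = z' := (mem_filter.mp hi).2.1
    simpa only [Prod.ext_iff, hzi] using hE2 i

/-- Threshold selection (mechanism ALL): under prediction map `f`, ad `i` shows iff
`b i * f (z i) ≥ 1`.  Property E2 (`E_C[p | z,b] = E_C[p | z]` whenever defined)
implies selection invariance: for every prediction map `f` and bucket `z'` such that
some ad of bucket `z'` is shown under `f`, the expected CTR over the shown ads of
bucket `z'` equals `E_C[p | z']` — in particular it is the same for all maps. -/
theorem propE2_implies_selection_invariance_ALL (n : ℕ)
    (p b w : Fin n → ℝ) (z : Fin n → ℕ)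
    (hp : ∀ i, 0 ≤ p i ∧ p i ≤ 1) (hw : ∀ i, 0 < w i)
    (hE2 : ∀ i : Fin n,
      condMean w p (Finset.univ.filter (fun j => z j = z i ∧ b j = b i))
        = condMean w p (Finset.univ.filter (fun j => z j = z i))) :
    ∀ (f : ℕ → ℝ) (z' : ℕ),
      (∃ i : Fin n, z i = z' ∧ b i * f (z i) ≥ 1) →
      condMean w p (Finset.univ.filter (fun j => z j = z' ∧ b j * f (z j) ≥ 1))
        = condMean w p (Finset.univ.filter (fun j => z j = z')) :=
  propE2_implies_selection_invariance_ALL_general n p b w z hw hE2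
end

section
/- Under threshold selection (mechanism ALL), selection invariance implies Property E2: if for all prediction maps f, f' and all z where defined, E_f[p | z] = E_{f'}[p | z], then E_C[p | z, b] = E_C[p | z] for all (z,b) with positive probability. Proof idea: fix z, sort distinct bids decreasingly b_1 > b_2 > ⋯; thresholds 1/b_j show exactly the ads with bid ≥ b_j, and equality of the weighted mean CTRs of successive prefixes forces each bid-level's weighted mean CTR to equal the overall mean E_C[p | z]. -/
open Finset

section UpperSets

variable {ι α : Type*} [Fintype ι] [LinearOrder α]

theorem exists_filter_le_eq_filter_lt (b : ι → α) (a : α)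
    (h : (univ.filter fun j => a < b j).Nonempty) :
    ∃ k, univ.filter (fun j => b k ≤ b j) = univ.filter fun j => a < b j := by
  obtain ⟨k, hk, hmin⟩ := exists_min_image _ b h
  refine ⟨k, filter_congr fun j _ => ⟨fun hj => ?_, fun hj => hmin j (by simpa using hj)⟩⟩
  exact (mem_filter.1 hk).2.trans_le hj

theorem sum_filter_le_eq_sum_filter_eq_add_sum_filter_lt {M : Type*} [AddCommMonoid M]
    (b : ι → α) (a : α) (f : ι → M) :
    ∑ j ∈ univ.filter (fun j => a ≤ b j), f j
      = ∑ j ∈ univ.filter (fun j => b j = a), f j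
        + ∑ j ∈ univ.filter (fun j => a < b j), f j := by
  simp only [sum_filter, ← sum_add_distrib]
  refine sum_congr rfl fun j _ => ?_
  rcases lt_trichotomy a (b j) with h | h | h
  · simp [h, h.ne', h.le]
  · simp [h]
  · simp [h.ne, h.not_ge, h.not_gt]

end UpperSets

section CondMean

variable {n : ℕ} (w p : Fin n → ℝ)

theorem condMean_eq_iff_sum_mul_sub_eq_zero {S : Finset (Fin n)} (hS : ∑ i ∈ S, w i ≠ 0)
    (M : ℝ) : condMean w p S = M ↔ ∑ i ∈ S, w i * (p i - M) = 0 := by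
  simp only [condMean, div_eq_iff hS, mul_sub, sum_sub_distrib, ← sum_mul,
    sub_eq_zero, mul_comm M]

noncomputable def shownAds (b : Fin n → ℝ) (phat : ℝ) : Finset (Fin n) :=
  univ.filter fun i => b i * phat ≥ 1

theorem shownAds_inv {b : Fin n → ℝ} {k : Fin n} (hk : 0 < b k) :
    shownAds b (b k)⁻¹ = univ.filter fun j => b k ≤ b j := by
  refine filter_congr fun j _ => ?_
  rw [ge_iff_le, ← div_eq_mul_inv, one_le_div hk]

theorem shownAds_one {b : Fin n → ℝ} (hb : ∀ i, 1 < b i) : shownAds b 1 = univ :=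
  filter_true_of_mem fun j _ => by simpa using (hb j).le

theorem condMean_filter_bid_le_eq_condMean_univ {b : Fin n → ℝ} (hb : ∀ i, 1 < b i)
    (hSI : ∀ phat phat' : ℝ, phat ∈ Set.Ioc (0:ℝ) 1 → phat' ∈ Set.Ioc (0:ℝ) 1 →
      (shownAds b phat).Nonempty → (shownAds b phat').Nonempty →
      condMean w p (shownAds b phat) = condMean w p (shownAds b phat')) (k : Fin n) :
    condMean w p (univ.filter fun j => b k ≤ b j) = condMean w p univ := by
  have hk : 0 < b k := one_pos.trans (hb k)
  have hthreshold : (b k)⁻¹ ∈ Set.Ioc (0 : ℝ) 1 :=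
    ⟨inv_pos.2 hk, inv_le_one_of_one_le₀ (hb k).le⟩
  have hshown := hSI _ 1 hthreshold ⟨one_pos, le_rfl⟩
    ⟨k, by simp [shownAds_inv hk]⟩ (by simpa [shownAds_one hb] using ⟨k, mem_univ k⟩)
  rwa [shownAds_inv hk, shownAds_one hb] at hshown

end CondMean

theorem selection_invariance_implies_propE2_ALL_general (n : ℕ)
    (p b w : Fin n → ℝ)
    (hb : ∀ i, 1 < b i) (hw : ∀ i, 0 < w i)
    (hSI : ∀ phat phat' : ℝ, phat ∈ Set.Ioc (0:ℝ) 1 → phat' ∈ Set.Ioc (0:ℝ) 1 →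
      (Finset.univ.filter (fun i : Fin n => b i * phat ≥ 1)).Nonempty →
      (Finset.univ.filter (fun i : Fin n => b i * phat' ≥ 1)).Nonempty →
      condMean w p (Finset.univ.filter (fun i : Fin n => b i * phat ≥ 1))
        = condMean w p (Finset.univ.filter (fun i : Fin n => b i * phat' ≥ 1))) :
    ∀ i : Fin n,
      condMean w p (Finset.univ.filter (fun j => b j = b i))
        = condMean w p Finset.univ := by
  intro i
  set M := condMean w p univ
  have hpos (S : Finset (Fin n)) (hS : S.Nonempty) : ∑ j ∈ S, w j ≠ 0 :=
    (sum_pos (fun j _ => hw j) hS).ne'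
  have hupper (k : Fin n) : ∑ j ∈ univ.filter (fun j => b k ≤ b j), w j * (p j - M) = 0 :=
    (condMean_eq_iff_sum_mul_sub_eq_zero w p (hpos _ ⟨k, by simp⟩) M).1
      (condMean_filter_bid_le_eq_condMean_univ w p hb hSI k)
  have hstrict : ∑ j ∈ univ.filter (fun j => b i < b j), w j * (p j - M) = 0 := by
    rcases (univ.filter fun j => b i < b j).eq_empty_or_nonempty with hempty | hne
    · rw [hempty, sum_empty]
    · obtain ⟨k, hk⟩ := exists_filter_le_eq_filter_lt b (b i) hne
      rw [← hk, hupper k]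
  rw [condMean_eq_iff_sum_mul_sub_eq_zero w p (hpos _ ⟨i, by simp⟩)]
  have hlevel :=
    sum_filter_le_eq_sum_filter_eq_add_sum_filter_lt b (b i) fun j => w j * (p j - M)
  rw [hupper i, hstrict, add_zero] at hlevel
  exact hlevel.symm

/-- Threshold selection (mechanism ALL), single bucket: with prediction value `phat`,
ad `i` shows iff `b i * phat ≥ 1`.  Bids satisfy `b i > 1` and weights `w i > 0`.
Selection invariance — any two prediction values whose shown sets are nonempty give the
same weighted mean CTR over shown ads — implies Property E2: the weighted mean CTR
within each bid level equals the overall weighted mean `E_C[p | z]`. -/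
theorem selection_invariance_implies_propE2_ALL (n : ℕ) (hn : 0 < n)
    (p b w : Fin n → ℝ)
    (hp : ∀ i, 0 ≤ p i ∧ p i ≤ 1) (hb : ∀ i, 1 < b i) (hw : ∀ i, 0 < w i)
    (hSI : ∀ phat phat' : ℝ, phat ∈ Set.Ioc (0:ℝ) 1 → phat' ∈ Set.Ioc (0:ℝ) 1 →
      (Finset.univ.filter (fun i : Fin n => b i * phat ≥ 1)).Nonempty →
      (Finset.univ.filter (fun i : Fin n => b i * phat' ≥ 1)).Nonempty →
      condMean w p (Finset.univ.filter (fun i : Fin n => b i * phat ≥ 1))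
        = condMean w p (Finset.univ.filter (fun i : Fin n => b i * phat' ≥ 1))) :
    ∀ i : Fin n,
      condMean w p (Finset.univ.filter (fun j => b j = b i))
        = condMean w p Finset.univ :=
  selection_invariance_implies_propE2_ALL_general n p b w hb hw hSI
end

section
/- Under threshold selection (mechanism ALL), Property E2 implies the prediction map f*(z) = E_C[p | z] is efficiency-maximizing: for every prediction map f, EV(f) ≤ EV(f*), where EV(f) = Σ_i Pr^Q(q_i)·1[b_i·f(z_i) ≥ 1]·(p_i b_i − 1). Moreover, for each group B of ads sharing a common (b,z), Σ_{i∈B} Pr^Q(q_i)(p_i b_i − 1) = C_B(b·E_C[p|z] − 1) where C_B = Σ_{i∈B} Pr^Q(q_i), so f* shows a group exactly when it contributes non-negative value. -/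
open Finset Classical

/-- Expected value per query under mechanism ALL: ad `i` shows iff `b i * f (z i) ≥ 1`
and then contributes `w i * (p i * b i - 1)`, where `w i = Pr^Q(q_i)`. -/
noncomputable def EVall {n : ℕ} (p b w : Fin n → ℝ) (z : Fin n → ℕ) (f : ℕ → ℝ) : ℝ :=
  ∑ i, if b i * f (z i) ≥ 1 then w i * (p i * b i - 1) else 0

/- Since the bid and the bucket are constant on a group `B` of ads sharing `(b, z)`, every
prediction map shows either all of `B` or none of it, and by E2 the value of `B` is
`C_B (b E_C[p | z] - 1)`.  The map `fstar` shows `B` exactly when `b E_C[p | z] ≥ 1`, i.e.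
exactly when this value is non-negative, so on every group it does at least as well as any
other map. -/

lemma sum_ite_comp_eq_sum_image {ι κ M : Type*} [Fintype ι] [DecidableEq κ] [AddCommMonoid M]
    (k : ι → κ) (D : κ → Prop) (F : ι → M) :
    ∑ i, (if D (k i) then F i else 0)
      = ∑ c ∈ univ.image k, if D c then ∑ i with k i = c, F i else 0 := by
  rw [← sum_fiberwise_of_maps_to (fun i _ => mem_image_of_mem k (mem_univ i))]
  refine sum_congr rfl fun c _ => ?_
  calc ∑ i with k i = c, (if D (k i) then F i else 0)
      = ∑ i with k i = c, (if D c then F i else 0) :=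
        sum_congr rfl fun i hi => by rw [(mem_filter.mp hi).2]
    _ = if D c then ∑ i with k i = c, F i else 0 := by
        rw [sum_ite_irrel, sum_const_zero]

lemma sum_mul_eq_condMean_mul_sum {n : ℕ} (w p : Fin n → ℝ) {S : Finset (Fin n)}
    (hS : ∑ i ∈ S, w i ≠ 0) :
    ∑ i ∈ S, w i * p i = condMean w p S * ∑ i ∈ S, w i :=
  (div_eq_iff hS).mp rfl

lemma sum_mul_mul_sub_one_eq_of_condMean_eq {n : ℕ} (w p b : Fin n → ℝ) {S : Finset (Fin n)}
    {c m : ℝ} (hb : ∀ j ∈ S, b j = c) (hS : ∑ j ∈ S, w j ≠ 0) (hm : condMean w p S = m) :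
    ∑ j ∈ S, w j * (p j * b j - 1) = (∑ j ∈ S, w j) * (c * m - 1) := by
  calc ∑ j ∈ S, w j * (p j * b j - 1) = c * ∑ j ∈ S, w j * p j - ∑ j ∈ S, w j := by
        rw [mul_sum, ← sum_sub_distrib]
        exact sum_congr rfl fun j hj => by rw [hb j hj]; ring
    _ = (∑ j ∈ S, w j) * (c * m - 1) := by
        rw [sum_mul_eq_condMean_mul_sum w p hS, hm]; ring

lemma ite_le_ite_one_le {W x : ℝ} (P : Prop) [Decidable P] (hW : 0 ≤ W) :
    (if P then W * (x - 1) else 0) ≤ if 1 ≤ x then W * (x - 1) else 0 := by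
  by_cases hx : 1 ≤ x
  · have : 0 ≤ W * (x - 1) := mul_nonneg hW (by linarith)
    split_ifs <;> linarith
  · have : W * (x - 1) ≤ 0 := mul_nonpos_of_nonneg_of_nonpos hW (by linarith)
    split_ifs <;> linarith

lemma EVall_eq_sum_groups {n : ℕ} (p b w : Fin n → ℝ) (z : Fin n → ℕ) (f : ℕ → ℝ) :
    EVall p b w z f = ∑ c ∈ univ.image (fun i => (z i, b i)),
      if c.2 * f c.1 ≥ 1 then ∑ j with (z j, b j) = c, w j * (p j * b j - 1) else 0 :=
  sum_ite_comp_eq_sum_image (fun i => (z i, b i)) (fun c => c.2 * f c.1 ≥ 1) _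

theorem propE2_implies_fstar_efficiency_maximizing_ALL_general (n : ℕ)
    (p b w : Fin n → ℝ) (z : Fin n → ℕ)
    (hw : ∀ i, 0 < w i)
    (hE2 : ∀ i : Fin n,
      condMean w p (Finset.univ.filter (fun j => z j = z i ∧ b j = b i))
        = condMean w p (Finset.univ.filter (fun j => z j = z i)))
    (fstar : ℕ → ℝ)
    (hfstar : ∀ i : Fin n,
      fstar (z i) = condMean w p (Finset.univ.filter (fun j => z j = z i))) :
    (∀ i : Fin n,
      ∑ j ∈ Finset.univ.filter (fun j => z j = z i ∧ b j = b i), w j * (p j * b j - 1)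
        = (∑ j ∈ Finset.univ.filter (fun j => z j = z i ∧ b j = b i), w j)
          * (b i * condMean w p (Finset.univ.filter (fun j => z j = z i)) - 1)) ∧
    (∀ f : ℕ → ℝ, EVall p b w z f ≤ EVall p b w z fstar) := by
  have group_value : ∀ i : Fin n,
      ∑ j with z j = z i ∧ b j = b i, w j * (p j * b j - 1)
        = (∑ j with z j = z i ∧ b j = b i, w j)
          * (b i * condMean w p {j | z j = z i} - 1) := fun i =>
    sum_mul_mul_sub_one_eq_of_condMean_eq w p b (fun j hj => (mem_filter.mp hj).2.2)
      (sum_pos (fun j _ => hw j) ⟨i, by simp⟩).ne' (hE2 i)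
  refine ⟨group_value, fun f => ?_⟩
  rw [EVall_eq_sum_groups, EVall_eq_sum_groups]
  refine sum_le_sum fun c hc => ?_
  obtain ⟨i, -, rfl⟩ := mem_image.mp hc
  simp only [Prod.ext_iff, hfstar i, group_value i]
  exact ite_le_ite_one_le _ (sum_nonneg fun j _ => (hw j).le)

/-- Threshold selection (mechanism ALL).  Under Property E2
(`E_C[p | z,b] = E_C[p | z]` whenever defined), the prediction map
`fstar z' = E_C[p | z']` is efficiency-maximizing: `EV(f) ≤ EV(fstar)` for every map
`f`.  Moreover each group `B` of ads sharing a common `(b,z)` satisfies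
`∑_{i∈B} w i (p i b i - 1) = (∑_{i∈B} w i) * (b * E_C[p|z] - 1)`, so `fstar` shows a
group exactly when it contributes non-negative value. -/
theorem propE2_implies_fstar_efficiency_maximizing_ALL (n : ℕ)
    (p b w : Fin n → ℝ) (z : Fin n → ℕ)
    (hp : ∀ i, 0 ≤ p i ∧ p i ≤ 1) (hb : ∀ i, 0 < b i) (hw : ∀ i, 0 < w i)
    (hE2 : ∀ i : Fin n,
      condMean w p (Finset.univ.filter (fun j => z j = z i ∧ b j = b i))
        = condMean w p (Finset.univ.filter (fun j => z j = z i)))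
    (fstar : ℕ → ℝ)
    (hfstar : ∀ i : Fin n,
      fstar (z i) = condMean w p (Finset.univ.filter (fun j => z j = z i))) :
    (∀ i : Fin n,
      ∑ j ∈ Finset.univ.filter (fun j => z j = z i ∧ b j = b i), w j * (p j * b j - 1)
        = (∑ j ∈ Finset.univ.filter (fun j => z j = z i ∧ b j = b i), w j)
          * (b i * condMean w p (Finset.univ.filter (fun j => z j = z i)) - 1)) ∧
    (∀ f : ℕ → ℝ, EVall p b w z f ≤ EVall p b w z fstar) :=
  propE2_implies_fstar_efficiency_maximizing_ALL_general n p b w z hw hE2 fstar hfstar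
end

section
/- Under mechanism ONE, if Property E1 holds (E_C[p | z,b,q] = E_C[p | z] ≡ p̄(z) whenever defined), then f*(z) = p̄(z) is efficiency-maximizing: EV(f) ≤ Σ_q Pr^Q(q)·max over (b,z) groups on q of b·E_C[p | b,z,q] for every f, with equality for f*. -/
open Finset

/-- The group `B^q_{b,z}` of ad `i`: the ads on the same query sharing its bid and bucket. -/
noncomputable def group {n : ℕ} (b : Fin n → ℝ) (z q : Fin n → ℕ) (i : Fin n) :
    Finset (Fin n) :=
  Finset.univ.filter (fun j => q j = q i ∧ b j = b i ∧ z j = z i)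

/-- `E_C[p | b,z,q]`: the unweighted mean CTR over the group of ad `i`. -/
noncomputable def groupMean {n : ℕ} (p b : Fin n → ℝ) (z q : Fin n → ℕ) (i : Fin n) : ℝ :=
  (∑ j ∈ group b z q i, p j) / ((group b z q i).card : ℝ)

/-- The ads that can show on query `q'` under map `f` (mechanism ONE): those maximizing
`b i * f (z i)` among the candidates for `q'`; one of them is chosen uniformly. -/
noncomputable def shownOn {n : ℕ} (b : Fin n → ℝ) (z q : Fin n → ℕ) (f : ℕ → ℝ)
    (q' : ℕ) : Finset (Fin n) :=
  Finset.univ.filter (fun i => q i = q' ∧ ∀ j, q j = q' → b j * f (z j) ≤ b i * f (z i))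

/-- `EV(f) = Σ_q Pr^Q(q) Σ_i Pr_f(i|q) p_i b_i` under mechanism ONE. -/
noncomputable def EVone {n : ℕ} (p b : Fin n → ℝ) (z q : Fin n → ℕ) (PrQ : ℕ → ℝ)
    (f : ℕ → ℝ) : ℝ :=
  ∑ q' ∈ Finset.image q Finset.univ,
    PrQ q' * ((∑ i ∈ shownOn b z q f q', p i * b i) / ((shownOn b z q f q').card : ℝ))

/-! Every set of ads shown under mechanism ONE is a union of `(q, b, z)`-groups, so on it the
bid-weighted CTRs sum to the same total as `b i * E_C[p | b,z,q]`, which E1 turns into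
`b i * pbar (z i)`. Hence the value of any `f` on a query is an average of `b i * pbar (z i)` over
ads of that query, at most its maximum; `pbar` shows exactly the maximizers and so attains it. -/

section

variable {n : ℕ} (p b : Fin n → ℝ) (z q : Fin n → ℕ)

lemma mem_group_iff {i j : Fin n} :
    j ∈ group b z q i ↔ q j = q i ∧ b j = b i ∧ z j = z i := by
  simp [group]

lemma group_eq_of_mem {i j : Fin n} (h : j ∈ group b z q i) :
    group b z q j = group b z q i := by
  obtain ⟨hq, hb, hz⟩ := (mem_group_iff b z q).mp h
  ext k
  simp only [mem_group_iff, hq, hb, hz]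

lemma sum_group_mul_groupMean (i : Fin n) :
    ∑ j ∈ group b z q i, b j * groupMean p b z q j = ∑ j ∈ group b z q i, p j * b j := by
  have hcard : ((group b z q i).card : ℝ) ≠ 0 :=
    Nat.cast_ne_zero.mpr (card_pos.mpr ⟨i, (mem_group_iff b z q).mpr ⟨rfl, rfl, rfl⟩⟩).ne'
  have hb : ∀ j ∈ group b z q i, b j = b i := fun j hj => ((mem_group_iff b z q).mp hj).2.1
  calc ∑ j ∈ group b z q i, b j * groupMean p b z q j
      = ∑ _j ∈ group b z q i, b i * groupMean p b z q i :=
        sum_congr rfl fun j hj => by rw [hb j hj, groupMean, groupMean, group_eq_of_mem b z q hj]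
    _ = b i * ∑ j ∈ group b z q i, p j := by
        rw [sum_const, nsmul_eq_mul, groupMean, mul_left_comm, mul_div_cancel₀ _ hcard]
    _ = ∑ j ∈ group b z q i, p j * b j := by
        rw [mul_sum]; exact sum_congr rfl fun j hj => by rw [hb j hj, mul_comm]

lemma sum_mul_groupMean_of_group_subset {S : Finset (Fin n)}
    (hS : ∀ i ∈ S, group b z q i ⊆ S) :
    ∑ i ∈ S, b i * groupMean p b z q i = ∑ i ∈ S, p i * b i := by
  let key : Fin n → ℕ × ℝ × ℕ := fun i => (q i, b i, z i)
  have hkey : ∀ i ∈ S, key i ∈ S.image key := fun i hi => mem_image_of_mem key hi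
  have hfiber : ∀ i ∈ S, S.filter (fun j => key j = key i) = group b z q i := by
    intro i hi
    ext j
    simp only [mem_filter, mem_group_iff, key, Prod.mk.injEq]
    exact ⟨And.right, fun hj => ⟨hS i hi ((mem_group_iff b z q).mpr hj), hj⟩⟩
  rw [← sum_fiberwise_of_maps_to hkey, ← sum_fiberwise_of_maps_to hkey]
  refine sum_congr rfl fun k hk => ?_
  obtain ⟨i, hi, rfl⟩ := mem_image.mp hk
  rw [hfiber i hi, sum_group_mul_groupMean]

lemma mem_shownOn_iff (f : ℕ → ℝ) (q' : ℕ) {i : Fin n} :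
    i ∈ shownOn b z q f q' ↔ q i = q' ∧ ∀ j, q j = q' → b j * f (z j) ≤ b i * f (z i) := by
  simp [shownOn]

lemma group_subset_shownOn (f : ℕ → ℝ) (q' : ℕ) {i : Fin n} (hi : i ∈ shownOn b z q f q') :
    group b z q i ⊆ shownOn b z q f q' := by
  intro j hj
  obtain ⟨hq, hb, hz⟩ := (mem_group_iff b z q).mp hj
  rw [mem_shownOn_iff] at hi ⊢
  rw [hq, hb, hz]
  exact hi

lemma shownOn_nonempty (f : ℕ → ℝ) {q' : ℕ} (h : ∃ i, q i = q') :
    (shownOn b z q f q').Nonempty := by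
  obtain ⟨i, hi⟩ := h
  obtain ⟨m, hm, hmax⟩ := exists_max_image (univ.filter fun j => q j = q')
    (fun j => b j * f (z j)) ⟨i, by simpa using hi⟩
  refine ⟨m, (mem_shownOn_iff b z q f q').mpr ⟨(mem_filter.mp hm).2, fun j hj => ?_⟩⟩
  exact hmax j (by simpa using hj)

variable {p} {pbar : ℕ → ℝ}

lemma sum_shownOn_eq_of_groupMean (hE1 : ∀ i, groupMean p b z q i = pbar (z i))
    (f : ℕ → ℝ) (q' : ℕ) :
    ∑ i ∈ shownOn b z q f q', p i * b i = ∑ i ∈ shownOn b z q f q', b i * pbar (z i) := by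
  rw [← sum_mul_groupMean_of_group_subset p b z q fun _ => group_subset_shownOn b z q f q']
  simp only [hE1]

lemma average_shownOn_le (hE1 : ∀ i, groupMean p b z q i = pbar (z i))
    (f : ℕ → ℝ) {q' : ℕ} (hq' : ∃ i, q i = q') {M : ℝ}
    (hM : ∀ i, q i = q' → b i * pbar (z i) ≤ M) :
    (∑ i ∈ shownOn b z q f q', p i * b i) / ((shownOn b z q f q').card : ℝ) ≤ M := by
  obtain ⟨m, hm⟩ := shownOn_nonempty b z q f hq'
  have hcard : (0 : ℝ) < (shownOn b z q f q').card := Nat.cast_pos.mpr (card_pos.mpr ⟨m, hm⟩)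
  rw [div_le_iff₀ hcard, sum_shownOn_eq_of_groupMean b z q hE1, mul_comm, ← nsmul_eq_mul]
  exact sum_le_card_nsmul _ _ _ fun i hi => hM i ((mem_shownOn_iff b z q f q').mp hi).1

lemma average_shownOn_eq (hE1 : ∀ i, groupMean p b z q i = pbar (z i))
    {q' : ℕ} {m : Fin n} (hm : m ∈ shownOn b z q pbar q') :
    (∑ i ∈ shownOn b z q pbar q', p i * b i) / ((shownOn b z q pbar q').card : ℝ)
      = b m * pbar (z m) := by
  have hcard : ((shownOn b z q pbar q').card : ℝ) ≠ 0 :=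
    Nat.cast_ne_zero.mpr (card_pos.mpr ⟨m, hm⟩).ne'
  obtain ⟨hqm, hmax⟩ := (mem_shownOn_iff b z q pbar q').mp hm
  have hattain : ∀ i ∈ shownOn b z q pbar q', b i * pbar (z i) = b m * pbar (z m) := by
    intro i hi
    obtain ⟨hqi, himax⟩ := (mem_shownOn_iff b z q pbar q').mp hi
    exact le_antisymm (hmax i hqi) (himax m hqm)
  rw [sum_shownOn_eq_of_groupMean b z q hE1, sum_congr rfl hattain, sum_const, nsmul_eq_mul,
    mul_div_cancel_left₀ _ hcard]

end

theorem propE1_implies_fstar_efficiency_maximizing_ONE_general (n : ℕ)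
    (p b : Fin n → ℝ) (z q : Fin n → ℕ) (PrQ : ℕ → ℝ)
    (hPrQ : ∀ q', 0 ≤ PrQ q')
    (pbar : ℕ → ℝ)
    (hE1 : ∀ i : Fin n, groupMean p b z q i = pbar (z i)) :
    (∀ f : ℕ → ℝ, EVone p b z q PrQ f ≤ EVone p b z q PrQ pbar) ∧
    (∀ q' ∈ Finset.image q Finset.univ,
      IsGreatest {v : ℝ | ∃ i : Fin n, q i = q' ∧ v = b i * groupMean p b z q i}
        ((∑ i ∈ shownOn b z q pbar q', p i * b i) / ((shownOn b z q pbar q').card : ℝ))) := by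
  have hpbar_attains : ∀ q' ∈ image q univ, ∃ m, q m = q' ∧
      (∀ i, q i = q' → b i * pbar (z i) ≤ b m * pbar (z m)) ∧
      (∑ i ∈ shownOn b z q pbar q', p i * b i) / ((shownOn b z q pbar q').card : ℝ)
        = b m * pbar (z m) := by
    intro q' hq'
    obtain ⟨m, hm⟩ := shownOn_nonempty b z q pbar (by simpa using hq')
    obtain ⟨hqm, hm_max⟩ := (mem_shownOn_iff b z q pbar q').mp hm
    exact ⟨m, hqm, hm_max, average_shownOn_eq b z q hE1 hm⟩
  refine ⟨fun f => sum_le_sum fun q' hq' => ?_, fun q' hq' => ?_⟩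
  · obtain ⟨m, -, hm, heq⟩ := hpbar_attains q' hq'
    rw [heq]
    exact mul_le_mul_of_nonneg_left
      (average_shownOn_le b z q hE1 f (by simpa using hq') hm) (hPrQ q')
  · obtain ⟨m, hqm, hm, heq⟩ := hpbar_attains q' hq'
    rw [heq]
    refine ⟨⟨m, hqm, by rw [hE1]⟩, ?_⟩
    rintro v ⟨i, hqi, rfl⟩
    rw [hE1]
    exact hm i hqi

/-- Mechanism ONE.  If Property E1 holds — `E_C[p | z,b,q] = pbar z` whenever the
group is nonempty — then `fstar = pbar` is efficiency-maximizing: every map `f` has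
`EV(f) ≤ EV(fstar)`, and on each query `fstar` attains the bound
`max over (b,z)-groups of b * E_C[p | b,z,q]`. -/
theorem propE1_implies_fstar_efficiency_maximizing_ONE (n : ℕ)
    (p b : Fin n → ℝ) (z q : Fin n → ℕ) (PrQ : ℕ → ℝ)
    (hp : ∀ i, 0 ≤ p i ∧ p i ≤ 1) (hb : ∀ i, 0 < b i) (hPrQ : ∀ q', 0 ≤ PrQ q')
    (pbar : ℕ → ℝ)
    (hE1 : ∀ i : Fin n, groupMean p b z q i = pbar (z i)) :
    (∀ f : ℕ → ℝ, EVone p b z q PrQ f ≤ EVone p b z q PrQ pbar) ∧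
    (∀ q' ∈ Finset.image q Finset.univ,
      IsGreatest {v : ℝ | ∃ i : Fin n, q i = q' ∧ v = b i * groupMean p b z q i}
        ((∑ i ∈ shownOn b z q pbar q', p i * b i) / ((shownOn b z q pbar q').card : ℝ))) :=
  propE1_implies_fstar_efficiency_maximizing_ONE_general n p b z q PrQ hPrQ pbar hE1
end
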